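/- Under the assumptions that X is determining for K_1 and Y is determining for K_2, the families (K_1(·,x_j)·K_2(·,y_k))_{(j,k)∈ℕ²} and (L_{1,j}·L_{2,k})_{(j,k)∈ℕ²} are dual Riesz bases of H_{K, X×Y}, where L_{1,j} and L_{2,k} are the dual (sampling) basis functions for X in H_{K_1,X} and for Y in H_{K_2,Y}, respectively, and K is the tensor product kernel. -/

import Mathlib

/-!
The Gram operator `T` of `u j = k (x j)` is bounded and invertible on `ℓ²`, so `u` and its dual
family `L i = ∑ₘ (T⁻¹ eᵢ)ₘ u m` satisfy upper (Bessel) bounds, their Gram matrices being `T` and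
`T⁻¹`. Upper bounds survive the tensor product: expanding the second factor in an orthonormal
basis of a finite-dimensional subspace gives `‖∑ⱼ φ (u j) (h j)‖² ≤ M ∑ⱼ ‖h j‖²`. The two product
families are biorthogonal, and for a biorthogonal pair an upper bound for one family is a lower
bound for the other, since `∑ tᵢ² = ⟪∑ tᵢ uᵢ, ∑ tᵢ Lᵢ⟫`. Hence both are Riesz bases of their
closed spans, and these spans coincide: an element of the span of `u` orthogonal to every `L j`
has vanishing coefficients.
-/

open scoped RealInnerProductSpace

/-- A continuous symmetric kernel is positive definite if all kernel matrices
at finite sets of pairwise distinct points are (symmetric) positive definite. -/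
def IsPDKernel {E : Type*} [TopologicalSpace E] (K : E → E → ℝ) : Prop :=
  Continuous (fun p : E × E => K p.1 p.2) ∧ (∀ x y, K x y = K y x) ∧
  ∀ (n : ℕ) (x : Fin n → E), Function.Injective x →
    (Matrix.of fun i j => K (x i) (x j)).PosDef

/-- A family (v i) is a Riesz basis of the closed subspace S of a Hilbert space if it lies
in S and is the image of the canonical orthonormal basis of ℓ²(ι) under a bounded
invertible operator onto S. -/
def IsRieszBasisOf {ι H : Type*} [DecidableEq ι] [NormedAddCommGroup H]
    [InnerProductSpace ℝ H] (S : Submodule ℝ H) (v : ι → H) : Prop :=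
  (∀ i, v i ∈ S) ∧
  ∃ T : (lp (fun _ : ι => ℝ) 2) ≃L[ℝ] S, ∀ i, (T (lp.single 2 i 1) : H) = v i

/-- A family (v i) is a Riesz basis of the Hilbert space H if it is the image of the
canonical orthonormal basis of ℓ²(ι) under a bounded invertible operator. -/
def IsRieszBasis {ι H : Type*} [DecidableEq ι] [NormedAddCommGroup H]
    [InnerProductSpace ℝ H] (v : ι → H) : Prop :=
  ∃ T : (lp (fun _ : ι => ℝ) 2) ≃L[ℝ] H, ∀ i, T (lp.single 2 i 1) = v i

/-- (H, φ) realizes the Hilbert tensor product H₁ ⊗ H₂ : the bilinear map φ satisfies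
⟪φ f₁ f₂, φ g₁ g₂⟫ = ⟪f₁,g₁⟫⟪f₂,g₂⟫ and its range spans a dense subspace. -/
def IsHilbertTensorProduct {H1 H2 H : Type*}
    [NormedAddCommGroup H1] [InnerProductSpace ℝ H1]
    [NormedAddCommGroup H2] [InnerProductSpace ℝ H2]
    [NormedAddCommGroup H] [InnerProductSpace ℝ H]
    (φ : H1 →ₗ[ℝ] H2 →ₗ[ℝ] H) : Prop :=
  (∀ (f1 g1 : H1) (f2 g2 : H2), ⟪φ f1 f2, φ g1 g2⟫ = ⟪f1, g1⟫ * ⟪f2, g2⟫) ∧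
  (Submodule.span ℝ (Set.range fun p : H1 × H2 => φ p.1 p.2)).topologicalClosure = ⊤

open scoped lp

section Bessel

variable {ι E : Type*} [NormedAddCommGroup E] [InnerProductSpace ℝ E]

def HasBesselBound (v : ι → E) (M : ℝ) : Prop :=
  ∀ (s : Finset ι) (t : ι → ℝ), ‖∑ i ∈ s, t i • v i‖ ^ 2 ≤ M * ∑ i ∈ s, t i ^ 2

theorem inner_sum_smul_sum_smul_of_biorthogonal [DecidableEq ι] {u L : ι → E}
    (huL : ∀ i j, ⟪u i, L j⟫ = if i = j then 1 else 0) (s : Finset ι) (t : ι → ℝ) :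
    ⟪∑ i ∈ s, t i • u i, ∑ i ∈ s, t i • L i⟫ = ∑ i ∈ s, t i ^ 2 := by
  simp [sum_inner, inner_sum, real_inner_smul_left, real_inner_smul_right, huL, sq]

theorem HasBesselBound.sum_sq_le_of_biorthogonal [DecidableEq ι] {u L : ι → E} {M : ℝ}
    (hL : HasBesselBound L M) (hM : 0 ≤ M) (huL : ∀ i j, ⟪u i, L j⟫ = if i = j then 1 else 0)
    (s : Finset ι) (t : ι → ℝ) :
    ∑ i ∈ s, t i ^ 2 ≤ M * ‖∑ i ∈ s, t i • u i‖ ^ 2 := by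
  set a := ∑ i ∈ s, t i ^ 2
  have ha : 0 ≤ a := Finset.sum_nonneg fun i _ => sq_nonneg (t i)
  have hcs : a ≤ ‖∑ i ∈ s, t i • u i‖ * ‖∑ i ∈ s, t i • L i‖ :=
    (inner_sum_smul_sum_smul_of_biorthogonal huL s t).ge.trans (real_inner_le_norm _ _)
  have hLa := hL s t
  rcases ha.eq_or_lt with hzero | hpos
  · rw [← hzero]; positivity
  · nlinarith [norm_nonneg (∑ i ∈ s, t i • u i), norm_nonneg (∑ i ∈ s, t i • L i),
      mul_nonneg hM (sq_nonneg ‖∑ i ∈ s, t i • u i‖)]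

end Bessel

section Synthesis

variable {ι E : Type*} [NormedAddCommGroup E] [InnerProductSpace ℝ E]

theorem lp.hasSum_sq (c : ℓ²(ι, ℝ)) : HasSum (fun i => c i ^ 2) (‖c‖ ^ 2) := by
  simpa using lp.hasSum_norm (p := 2) (by norm_num) c

theorem hasSum_lpSingle_one_smul [DecidableEq ι] {M : Type*} [AddCommMonoid M]
    [TopologicalSpace M] [Module ℝ M] (f : ι → M) (i : ι) :
    HasSum (fun j => (lp.single 2 i (1 : ℝ) : ℓ²(ι, ℝ)) j • f j) (f i) := by
  convert hasSum_ite_eq i (f i) using 2 with j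
  by_cases h : j = i <;> simp [lp.single_apply, h]

theorem HasSum.mem_topologicalClosure_span {v : ι → E} {c : ι → ℝ} {x : E}
    (h : HasSum (fun i => c i • v i) x) :
    x ∈ (Submodule.span ℝ (Set.range v)).topologicalClosure :=
  (Submodule.isClosed_topologicalClosure _).mem_of_tendsto h <| .of_forall fun _ =>
    Submodule.le_topologicalClosure _ <| Submodule.sum_mem _ fun i _ =>
      Submodule.smul_mem _ _ <| Submodule.subset_span ⟨i, rfl⟩

theorem HasSum.inner_smul_right {v : ι → E} {c : ι → ℝ} {x : E}
    (h : HasSum (fun i => c i • v i) x) (y : E) : HasSum (fun i => c i * ⟪y, v i⟫) ⟪y, x⟫ := by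
  simpa only [innerSL_apply_apply, real_inner_smul_right] using h.mapL (innerSL ℝ y)

variable {v : ι → E} {M : ℝ}

theorem HasBesselBound.summable [CompleteSpace E] (hv : HasBesselBound v M) (c : ℓ²(ι, ℝ)) :
    Summable fun i => c i • v i := by
  rw [summable_iff_vanishing_norm]
  intro ε hε
  obtain ⟨s, hs⟩ := summable_iff_vanishing_norm.mp (lp.hasSum_sq c).summable
    (ε ^ 2 / (|M| + 1)) (by positivity)
  refine ⟨s, fun t ht => lt_of_pow_lt_pow_left₀ 2 hε.le ?_⟩
  have hsmall : ∑ i ∈ t, c i ^ 2 < ε ^ 2 / (|M| + 1) := (le_abs_self _).trans_lt (hs t ht)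
  have hnonneg : 0 ≤ ∑ i ∈ t, c i ^ 2 := Finset.sum_nonneg fun i _ => sq_nonneg (c i)
  calc ‖∑ i ∈ t, c i • v i‖ ^ 2 ≤ M * ∑ i ∈ t, c i ^ 2 := hv t c
    _ ≤ |M| * ∑ i ∈ t, c i ^ 2 := by gcongr; exact le_abs_self M
    _ ≤ |M| * (ε ^ 2 / (|M| + 1)) := by gcongr
    _ < ε ^ 2 := by
      rw [mul_div_assoc', div_lt_iff₀ (by positivity)]
      nlinarith [pow_pos hε 2]

theorem HasBesselBound.norm_sq_le (hv : HasBesselBound v M) (c : ℓ²(ι, ℝ)) {x : E}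
    (hx : HasSum (fun i => c i • v i) x) : ‖x‖ ^ 2 ≤ M * ‖c‖ ^ 2 :=
  le_of_tendsto_of_tendsto' (hx.norm.pow 2) ((lp.hasSum_sq c).const_mul M) fun s => hv s c

theorem norm_sq_le_of_sum_sq_le {C : ℝ}
    (hv : ∀ (s : Finset ι) (t : ι → ℝ), ∑ i ∈ s, t i ^ 2 ≤ C * ‖∑ i ∈ s, t i • v i‖ ^ 2)
    (c : ℓ²(ι, ℝ)) {x : E} (hx : HasSum (fun i => c i • v i) x) : ‖c‖ ^ 2 ≤ C * ‖x‖ ^ 2 :=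
  le_of_tendsto_of_tendsto' (lp.hasSum_sq c) ((hx.norm.pow 2).const_mul C) fun s => hv s c

theorem HasBesselBound.exists_hasSum [CompleteSpace E] (hv : HasBesselBound v M) (hM : 0 ≤ M) :
    ∃ V : ℓ²(ι, ℝ) →L[ℝ] E, ∀ c, HasSum (fun i => c i • v i) (V c) := by
  refine ⟨LinearMap.mkContinuous
    { toFun := fun c => ∑' i, c i • v i
      map_add' := fun c d => ?_
      map_smul' := fun r c => ?_ } (√M) fun c => ?_, fun c => (hv.summable c).hasSum⟩
  · simp only [lp.coeFn_add, Pi.add_apply, add_smul]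
    exact (hv.summable c).tsum_add (hv.summable d)
  · simp only [lp.coeFn_smul, Pi.smul_apply, smul_eq_mul, mul_smul, RingHom.id_apply]
    exact (hv.summable c).tsum_const_smul r
  · have h := hv.norm_sq_le c (hv.summable c).hasSum
    calc ‖∑' i, c i • v i‖ = √(‖∑' i, c i • v i‖ ^ 2) := (Real.sqrt_sq (norm_nonneg _)).symm
      _ ≤ √(M * ‖c‖ ^ 2) := Real.sqrt_le_sqrt h
      _ = √M * ‖c‖ := by rw [Real.sqrt_mul hM, Real.sqrt_sq (norm_nonneg _)]

end Synthesis

section RieszBasis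

variable {ι E : Type*} [NormedAddCommGroup E] [InnerProductSpace ℝ E] [CompleteSpace E]
  [DecidableEq ι] {v : ι → E} {M C : ℝ}

theorem HasBesselBound.exists_equiv_topologicalClosure_span (hv : HasBesselBound v M)
    (hM : 0 ≤ M)
    (hlow : ∀ (s : Finset ι) (t : ι → ℝ), ∑ i ∈ s, t i ^ 2 ≤ C * ‖∑ i ∈ s, t i • v i‖ ^ 2) :
    ∃ V : ℓ²(ι, ℝ) ≃L[ℝ] (Submodule.span ℝ (Set.range v)).topologicalClosure,
      ∀ c, HasSum (fun i => c i • v i) (V c : E) := by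
  set S := (Submodule.span ℝ (Set.range v)).topologicalClosure
  obtain ⟨V, hV⟩ := hv.exists_hasSum hM
  have hVS : ∀ c, V c ∈ S := fun c => (hV c).mem_topologicalClosure_span
  have hanti : AntilipschitzWith ⟨√C, Real.sqrt_nonneg C⟩ V := by
    refine V.antilipschitz_of_bound fun c => ?_
    calc ‖c‖ = √(‖c‖ ^ 2) := (Real.sqrt_sq (norm_nonneg _)).symm
      _ ≤ √(C * ‖V c‖ ^ 2) := Real.sqrt_le_sqrt (norm_sq_le_of_sum_sq_le hlow c (hV c))
      _ = √C * ‖V c‖ := by rw [Real.sqrt_mul' _ (sq_nonneg _), Real.sqrt_sq (norm_nonneg _)]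
  have hrange : (V : ℓ²(ι, ℝ) →ₗ[ℝ] E).range = S := by
    refine le_antisymm (LinearMap.range_le_iff_comap.mpr (eq_top_iff.mpr fun c _ => hVS c)) ?_
    refine Submodule.topologicalClosure_minimal _ ?_ (hanti.isClosed_range V.uniformContinuous)
    rw [Submodule.span_le]
    rintro _ ⟨i, rfl⟩
    exact ⟨lp.single 2 i 1, (hV _).unique (hasSum_lpSingle_one_smul v i)⟩
  let W := V.codRestrict S hVS
  have hW : Function.Bijective W := by
    refine ⟨fun c d h => hanti.injective (congrArg Subtype.val h), fun x => ?_⟩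
    obtain ⟨c, hc⟩ := hrange.ge x.2
    exact ⟨c, Subtype.ext hc⟩
  exact ⟨.ofBijective W (LinearMap.ker_eq_bot.mpr hW.1) (LinearMap.range_eq_top.mpr hW.2),
    fun c => hV c⟩

theorem HasBesselBound.isRieszBasisOf_topologicalClosure_span (hv : HasBesselBound v M)
    (hM : 0 ≤ M)
    (hlow : ∀ (s : Finset ι) (t : ι → ℝ), ∑ i ∈ s, t i ^ 2 ≤ C * ‖∑ i ∈ s, t i • v i‖ ^ 2) :
    IsRieszBasisOf (Submodule.span ℝ (Set.range v)).topologicalClosure v := by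
  obtain ⟨V, hV⟩ := hv.exists_equiv_topologicalClosure_span hM hlow
  exact ⟨fun i => Submodule.le_topologicalClosure _ (Submodule.subset_span ⟨i, rfl⟩), V,
    fun i => (hV _).unique (hasSum_lpSingle_one_smul v i)⟩

end RieszBasis

section Biorthogonal

variable {ι E : Type*} [NormedAddCommGroup E] [InnerProductSpace ℝ E] [CompleteSpace E]
  [DecidableEq ι] {u L : ι → E} {M N : ℝ}

theorem HasBesselBound.topologicalClosure_span_eq_of_biorthogonal (hu : HasBesselBound u M)
    (hM : 0 ≤ M) (hL : HasBesselBound L N) (hN : 0 ≤ N)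
    (huL : ∀ i j, ⟪u i, L j⟫ = if i = j then 1 else 0)
    (hLu : ∀ i, L i ∈ (Submodule.span ℝ (Set.range u)).topologicalClosure) :
    (Submodule.span ℝ (Set.range L)).topologicalClosure =
      (Submodule.span ℝ (Set.range u)).topologicalClosure := by
  set R := (Submodule.span ℝ (Set.range L)).topologicalClosure
  set S := (Submodule.span ℝ (Set.range u)).topologicalClosure
  have hRS : R ≤ S := Submodule.topologicalClosure_minimal _
    (Submodule.span_le.mpr (Set.range_subset_iff.mpr hLu)) (Submodule.isClosed_topologicalClosure _)
  obtain ⟨V, hV⟩ := hu.exists_equiv_topologicalClosure_span hM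
    (hL.sum_sq_le_of_biorthogonal hN huL)
  have hcoeff : ∀ c j, ⟪L j, (V c : E)⟫ = c j := fun c j =>
    ((hV c).inner_smul_right (L j)).unique <| by
      convert hasSum_ite_eq j (c j) using 2 with i
      rw [real_inner_comm, huL]
      split_ifs with h <;> simp [h]
  have hperp : Rᗮ ⊓ S = ⊥ := by
    refine (Submodule.eq_bot_iff _).mpr ?_
    rintro x ⟨hxR, hxS⟩
    obtain ⟨c, hc⟩ := V.surjective ⟨x, hxS⟩
    have hc0 : c = 0 := lp.ext <| funext fun j => by
      rw [← hcoeff, hc]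
      exact Submodule.inner_right_of_mem_orthogonal
        (Submodule.le_topologicalClosure _ (Submodule.subset_span (Set.mem_range_self j))) hxR
    simpa [hc0] using (congrArg Subtype.val hc).symm
  rw [← Submodule.sup_orthogonal_inf_of_hasOrthogonalProjection hRS, hperp, sup_bot_eq]

theorem isRieszBasisOf_of_biorthogonal (hu : HasBesselBound u M) (hM : 0 ≤ M)
    (hL : HasBesselBound L N) (hN : 0 ≤ N) (huL : ∀ i j, ⟪u i, L j⟫ = if i = j then 1 else 0)
    (hLu : ∀ i, L i ∈ (Submodule.span ℝ (Set.range u)).topologicalClosure) :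
    IsRieszBasisOf (Submodule.span ℝ (Set.range u)).topologicalClosure u ∧
      IsRieszBasisOf (Submodule.span ℝ (Set.range u)).topologicalClosure L := by
  have hLu' : ∀ i j, ⟪L i, u j⟫ = if i = j then 1 else 0 := fun i j => by
    rw [real_inner_comm, huL]; exact if_congr eq_comm rfl rfl
  refine ⟨hu.isRieszBasisOf_topologicalClosure_span hM (hL.sum_sq_le_of_biorthogonal hN huL), ?_⟩
  rw [← hu.topologicalClosure_span_eq_of_biorthogonal hM hL hN huL hLu]
  exact hL.isRieszBasisOf_topologicalClosure_span hN (hu.sum_sq_le_of_biorthogonal hM hLu')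

end Biorthogonal

section Gram

variable {ι E : Type*} [NormedAddCommGroup E] [InnerProductSpace ℝ E]

def IsGramOperator (u : ι → E) (T : ℓ²(ι, ℝ) →L[ℝ] ℓ²(ι, ℝ)) : Prop :=
  ∀ (c : ℓ²(ι, ℝ)) (j : ι), HasSum (fun m => ⟪u j, u m⟫ * c m) (T c j)

variable [DecidableEq ι] {u : ι → E}

theorem lp.norm_sum_single_sq (s : Finset ι) (t : ι → ℝ) :
    ‖∑ i ∈ s, lp.single 2 i (t i)‖ ^ 2 = ∑ i ∈ s, t i ^ 2 := by
  simpa using lp.norm_sum_single (p := 2) (by norm_num) t s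

theorem hasBesselBound_of_apply_single (A : ℓ²(ι, ℝ) →L[ℝ] ℓ²(ι, ℝ))
    (hA : ∀ i j, A (lp.single 2 j 1) i = ⟪u i, u j⟫) : HasBesselBound u ‖A‖ := by
  intro s t
  set x : ℓ²(ι, ℝ) := ∑ i ∈ s, lp.single 2 i (t i)
  have hsingle : ∀ j, (lp.single 2 j (t j) : ℓ²(ι, ℝ)) = t j • lp.single 2 j 1 := fun j => by
    rw [← lp.single_smul, smul_eq_mul, mul_one]
  have hquad : ‖∑ i ∈ s, t i • u i‖ ^ 2 = ⟪x, A x⟫ := by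
    simp only [x, ← real_inner_self_eq_norm_sq, map_sum, sum_inner, inner_sum, hsingle, map_smul,
      real_inner_smul_left, real_inner_smul_right, lp.inner_single_left, hA]
    simp only [RCLike.inner_apply, Real.ringHom_apply, mul_one]
  calc ‖∑ i ∈ s, t i • u i‖ ^ 2 = ⟪x, A x⟫ := hquad
    _ ≤ ‖x‖ * ‖A x‖ := real_inner_le_norm _ _
    _ ≤ ‖x‖ * (‖A‖ * ‖x‖) := by gcongr; exact A.le_opNorm x
    _ = ‖A‖ * ∑ i ∈ s, t i ^ 2 := by rw [← lp.norm_sum_single_sq s t]; ring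

variable {T : ℓ²(ι, ℝ) →L[ℝ] ℓ²(ι, ℝ)}

theorem IsGramOperator.apply_single (hT : IsGramOperator u T) (i j : ι) :
    T (lp.single 2 j 1) i = ⟪u i, u j⟫ :=
  (hT _ i).unique <| by
    simpa only [smul_eq_mul, mul_comm] using hasSum_lpSingle_one_smul (fun m => ⟪u i, u m⟫) j

theorem IsGramOperator.hasBesselBound (hT : IsGramOperator u T) : HasBesselBound u ‖T‖ :=
  hasBesselBound_of_apply_single T hT.apply_single

variable {a : ι → ℓ²(ι, ℝ)} {L : ι → E}

theorem IsGramOperator.inner_dual_eq_ite (hT : IsGramOperator u T)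
    (ha : ∀ i, T (a i) = lp.single 2 i 1) (hL : ∀ i, HasSum (fun m => a i m • u m) (L i))
    (j i : ι) : ⟪u j, L i⟫ = if j = i then 1 else 0 := by
  have h := hT (a i) j
  rw [ha, lp.single_apply] at h
  simp_rw [mul_comm ⟪u j, _⟫] at h
  simpa [Pi.single_apply] using ((hL i).inner_smul_right (u j)).unique h

theorem IsGramOperator.inner_dual_dual (hT : IsGramOperator u T)
    (ha : ∀ i, T (a i) = lp.single 2 i 1) (hL : ∀ i, HasSum (fun m => a i m • u m) (L i))
    (i j : ι) : ⟪L i, L j⟫ = a j i :=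
  ((hL j).inner_smul_right (L i)).unique <| by
    convert hasSum_ite_eq i (a j i) using 2 with m
    rw [real_inner_comm, hT.inner_dual_eq_ite ha hL]
    split_ifs with h <;> simp [h]

theorem IsGramOperator.exists_hasBesselBound_dual (hT : IsGramOperator u T)
    (hbij : Function.Bijective T) (ha : ∀ i, T (a i) = lp.single 2 i 1)
    (hL : ∀ i, HasSum (fun m => a i m • u m) (L i)) : ∃ N, 0 ≤ N ∧ HasBesselBound L N := by
  let e := ContinuousLinearEquiv.ofBijective T (LinearMap.ker_eq_bot.mpr hbij.1)
    (LinearMap.range_eq_top.mpr hbij.2)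
  refine ⟨‖(e.symm : ℓ²(ι, ℝ) →L[ℝ] ℓ²(ι, ℝ))‖, norm_nonneg _,
    hasBesselBound_of_apply_single _ fun i j => ?_⟩
  have he : e.symm (lp.single 2 j 1) = a j := e.symm_apply_eq.mpr (ha j).symm
  rw [ContinuousLinearEquiv.coe_coe, he, hT.inner_dual_dual ha hL]

end Gram

section Tensor

variable {ι κ H1 H2 H : Type*} [NormedAddCommGroup H1] [InnerProductSpace ℝ H1]
  [NormedAddCommGroup H2] [InnerProductSpace ℝ H2] [NormedAddCommGroup H] [InnerProductSpace ℝ H]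
  {φ : H1 →ₗ[ℝ] H2 →ₗ[ℝ] H}

theorem norm_apply_apply_of_inner
    (hφ : ∀ (f1 g1 : H1) (f2 g2 : H2), ⟪φ f1 f2, φ g1 g2⟫ = ⟪f1, g1⟫ * ⟪f2, g2⟫)
    (x : H1) (y : H2) : ‖φ x y‖ = ‖x‖ * ‖y‖ := by
  refine (sq_eq_sq₀ (norm_nonneg _) (by positivity)).mp ?_
  rw [mul_pow, ← real_inner_self_eq_norm_sq, hφ, real_inner_self_eq_norm_sq,
    real_inner_self_eq_norm_sq]

theorem norm_sum_apply_orthonormal_sq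
    (hφ : ∀ (f1 g1 : H1) (f2 g2 : H2), ⟪φ f1 f2, φ g1 g2⟫ = ⟪f1, g1⟫ * ⟪f2, g2⟫)
    {e : κ → H2} (he : Orthonormal ℝ e) (s : Finset κ) (g : κ → H1) :
    ‖∑ m ∈ s, φ (g m) (e m)‖ ^ 2 = ∑ m ∈ s, ‖g m‖ ^ 2 := by
  classical
  rw [← real_inner_self_eq_norm_sq]
  simp only [sum_inner, inner_sum, hφ, orthonormal_iff_ite.mp he, mul_ite, mul_one, mul_zero,
    Finset.sum_ite_eq', Finset.sum_ite_mem, Finset.inter_self, real_inner_self_eq_norm_sq]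

theorem HasBesselBound.norm_sum_apply_sq_le {u : ι → H1} {M : ℝ} (hu : HasBesselBound u M)
    (hφ : ∀ (f1 g1 : H1) (f2 g2 : H2), ⟪φ f1 f2, φ g1 g2⟫ = ⟪f1, g1⟫ * ⟪f2, g2⟫)
    (s : Finset ι) (h : ι → H2) :
    ‖∑ j ∈ s, φ (u j) (h j)‖ ^ 2 ≤ M * ∑ j ∈ s, ‖h j‖ ^ 2 := by
  classical
  let W := Submodule.span ℝ (h '' s)
  have : FiniteDimensional ℝ W := FiniteDimensional.span_of_finite ℝ (s.finite_toSet.image h)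
  let b := stdOrthonormalBasis ℝ W
  let e := fun m => (b m : H2)
  have he : Orthonormal ℝ e := b.orthonormal.comp_linearIsometry W.subtypeₗᵢ
  let c := fun m j => ⟪e m, h j⟫
  have hmem : ∀ j ∈ s, h j ∈ W := fun j hj => Submodule.subset_span ⟨j, hj, rfl⟩
  have hexp : ∀ j ∈ s, h j = ∑ m, c m j • e m := fun j hj => by
    simpa [c, e] using (congrArg Subtype.val (b.sum_repr' ⟨h j, hmem j hj⟩)).symm
  have hparseval : ∀ j ∈ s, ‖h j‖ ^ 2 = ∑ m, c m j ^ 2 := fun j hj =>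
    (b.sum_sq_inner_right ⟨h j, hmem j hj⟩).symm
  have hregroup : ∑ j ∈ s, φ (u j) (h j) = ∑ m, φ (∑ j ∈ s, c m j • u j) (e m) := by
    calc ∑ j ∈ s, φ (u j) (h j) = ∑ j ∈ s, ∑ m, c m j • φ (u j) (e m) :=
          Finset.sum_congr rfl fun j hj => by rw [hexp j hj, map_sum]; simp only [map_smul]
      _ = ∑ m, φ (∑ j ∈ s, c m j • u j) (e m) := by
          rw [Finset.sum_comm]
          simp only [map_sum, map_smul, LinearMap.sum_apply, LinearMap.smul_apply]
  calc ‖∑ j ∈ s, φ (u j) (h j)‖ ^ 2 = ∑ m, ‖∑ j ∈ s, c m j • u j‖ ^ 2 := by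
        rw [hregroup, norm_sum_apply_orthonormal_sq hφ he]
    _ ≤ ∑ m, M * ∑ j ∈ s, c m j ^ 2 := Finset.sum_le_sum fun m _ => hu s (c m)
    _ = M * ∑ j ∈ s, ‖h j‖ ^ 2 := by
        rw [← Finset.mul_sum, Finset.sum_comm, Finset.sum_congr rfl hparseval]

theorem HasBesselBound.tensor {u : ι → H1} {w : κ → H2} {M1 M2 : ℝ} (hu : HasBesselBound u M1)
    (hw : HasBesselBound w M2) (hM1 : 0 ≤ M1)
    (hφ : ∀ (f1 g1 : H1) (f2 g2 : H2), ⟪φ f1 f2, φ g1 g2⟫ = ⟪f1, g1⟫ * ⟪f2, g2⟫) :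
    HasBesselBound (fun p : ι × κ => φ (u p.1) (w p.2)) (M1 * M2) := by
  classical
  intro s t
  set t' : ι × κ → ℝ := fun p => if p ∈ s then t p else 0
  have hs : s ⊆ s.image Prod.fst ×ˢ s.image Prod.snd := fun p hp =>
    Finset.mem_product.mpr ⟨Finset.mem_image_of_mem _ hp, Finset.mem_image_of_mem _ hp⟩
  have hsum : ∑ p ∈ s, t p • φ (u p.1) (w p.2) =
      ∑ p ∈ s.image Prod.fst ×ˢ s.image Prod.snd, t' p • φ (u p.1) (w p.2) := by
    rw [← Finset.sum_subset hs fun p _ hp => by simp [t', hp]]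
    exact Finset.sum_congr rfl fun p hp => by simp [t', hp]
  have hsq : ∑ p ∈ s, t p ^ 2 = ∑ p ∈ s.image Prod.fst ×ˢ s.image Prod.snd, t' p ^ 2 := by
    rw [← Finset.sum_subset hs fun p _ hp => by simp [t', hp]]
    exact Finset.sum_congr rfl fun p hp => by simp [t', hp]
  rw [hsum, hsq, Finset.sum_product, Finset.sum_product]
  have hfiber : ∀ j, ∑ k ∈ s.image Prod.snd, t' (j, k) • φ (u j) (w k) =
      φ (u j) (∑ k ∈ s.image Prod.snd, t' (j, k) • w k) := fun j => by
    simp only [map_sum, map_smul]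
  simp only [hfiber]
  calc _ ≤ M1 * ∑ j ∈ s.image Prod.fst, ‖∑ k ∈ s.image Prod.snd, t' (j, k) • w k‖ ^ 2 :=
        hu.norm_sum_apply_sq_le hφ _ _
    _ ≤ M1 * ∑ j ∈ s.image Prod.fst, M2 * ∑ k ∈ s.image Prod.snd, t' (j, k) ^ 2 := by
        gcongr with j; exact hw _ _
    _ = _ := by rw [← Finset.mul_sum, mul_assoc]

end Tensor

theorem ContinuousLinearMap.apply_apply_mem_topologicalClosure_span {ι κ E F G : Type*}
    [NormedAddCommGroup E] [NormedSpace ℝ E] [NormedAddCommGroup F] [NormedSpace ℝ F]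
    [NormedAddCommGroup G] [NormedSpace ℝ G] (B : E →L[ℝ] F →L[ℝ] G) {u : ι → E} {w : κ → F}
    {x : E} {y : F} (hx : x ∈ (Submodule.span ℝ (Set.range u)).topologicalClosure)
    (hy : y ∈ (Submodule.span ℝ (Set.range w)).topologicalClosure) :
    B x y ∈
      (Submodule.span ℝ (Set.range fun p : ι × κ => B (u p.1) (w p.2))).topologicalClosure := by
  set K := (Submodule.span ℝ (Set.range fun p : ι × κ => B (u p.1) (w p.2))).topologicalClosure
  have hK : IsClosed (K : Set G) := Submodule.isClosed_topologicalClosure _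
  have hu : ∀ i, B (u i) y ∈ K := fun i =>
    Submodule.topologicalClosure_minimal (t := K.comap (B (u i) : F →ₗ[ℝ] G)) _
      (Submodule.span_le.mpr <| Set.range_subset_iff.mpr fun k =>
        Submodule.le_topologicalClosure _ (Submodule.subset_span ⟨(i, k), rfl⟩))
      (hK.preimage (B (u i)).continuous) hy
  exact Submodule.topologicalClosure_minimal (t := K.comap (B.flip y : E →ₗ[ℝ] G)) _
    (Submodule.span_le.mpr (Set.range_subset_iff.mpr hu)) (hK.preimage (B.flip y).continuous) hx

theorem stmt_18_general {d1 d2 : ℕ}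
    (K1 : EuclideanSpace ℝ (Fin d1) → EuclideanSpace ℝ (Fin d1) → ℝ)
    (K2 : EuclideanSpace ℝ (Fin d2) → EuclideanSpace ℝ (Fin d2) → ℝ)
    {H1 : Type*} [NormedAddCommGroup H1] [InnerProductSpace ℝ H1]
    (k1 : EuclideanSpace ℝ (Fin d1) → H1) (hk1 : ∀ x y, ⟪k1 x, k1 y⟫ = K1 x y)
    {H2 : Type*} [NormedAddCommGroup H2] [InnerProductSpace ℝ H2]
    (k2 : EuclideanSpace ℝ (Fin d2) → H2) (hk2 : ∀ x y, ⟪k2 x, k2 y⟫ = K2 x y)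
    -- H realizes the Hilbert tensor product H_{K₁} ⊗ H_{K₂} ≅ H_K, with feature map kk
    {H : Type*} [NormedAddCommGroup H] [InnerProductSpace ℝ H] [CompleteSpace H]
    (φ : H1 →ₗ[ℝ] H2 →ₗ[ℝ] H) (hφ : IsHilbertTensorProduct φ)
    (kk : EuclideanSpace ℝ (Fin d1) × EuclideanSpace ℝ (Fin d2) → H)
    (hkk : ∀ p, kk p = φ (k1 p.1) (k2 p.2))
    -- X and Y are determining sequences
    (X : ℕ → EuclideanSpace ℝ (Fin d1))
    (Y : ℕ → EuclideanSpace ℝ (Fin d2))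
    (T1 : lp (fun _ : ℕ => ℝ) 2 →L[ℝ] lp (fun _ : ℕ => ℝ) 2)
    (hT1bij : Function.Bijective T1)
    (hT1 : ∀ (c : lp (fun _ : ℕ => ℝ) 2) (j : ℕ),
      HasSum (fun m => K1 (X j) (X m) * c m) (T1 c j))
    (T2 : lp (fun _ : ℕ => ℝ) 2 →L[ℝ] lp (fun _ : ℕ => ℝ) 2)
    (hT2bij : Function.Bijective T2)
    (hT2 : ∀ (c : lp (fun _ : ℕ => ℝ) 2) (j : ℕ),
      HasSum (fun m => K2 (Y j) (Y m) * c m) (T2 c j))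
    -- the sampling (dual) functions L_{1,j} = Σ_n (A_{K₁,X}⁻¹ e_j)_n K₁(·,x_n),
    -- and similarly L_{2,k}
    (a1 : ℕ → lp (fun _ : ℕ => ℝ) 2) (ha1 : ∀ i, T1 (a1 i) = lp.single 2 i 1)
    (L1 : ℕ → H1) (hL1 : ∀ i, HasSum (fun m => a1 i m • k1 (X m)) (L1 i))
    (a2 : ℕ → lp (fun _ : ℕ => ℝ) 2) (ha2 : ∀ i, T2 (a2 i) = lp.single 2 i 1)
    (L2 : ℕ → H2) (hL2 : ∀ i, HasSum (fun m => a2 i m • k2 (Y m)) (L2 i)) :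
    IsRieszBasisOf
      ((Submodule.span ℝ (Set.range fun p : ℕ × ℕ => kk (X p.1, Y p.2))).topologicalClosure)
      (fun p : ℕ × ℕ => kk (X p.1, Y p.2)) ∧
    IsRieszBasisOf
      ((Submodule.span ℝ (Set.range fun p : ℕ × ℕ => kk (X p.1, Y p.2))).topologicalClosure)
      (fun p : ℕ × ℕ => φ (L1 p.1) (L2 p.2)) ∧
    ∀ p q : ℕ × ℕ, ⟪kk (X p.1, Y p.2), φ (L1 q.1) (L2 q.2)⟫ = if p = q then 1 else 0 := by
  set u1 : ℕ → H1 := fun m => k1 (X m)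
  set u2 : ℕ → H2 := fun m => k2 (Y m)
  have hG1 : IsGramOperator u1 T1 := fun c j => by simpa only [u1, hk1] using hT1 c j
  have hG2 : IsGramOperator u2 T2 := fun c j => by simpa only [u2, hk2] using hT2 c j
  obtain ⟨N1, hN1, hL1B⟩ := hG1.exists_hasBesselBound_dual hT1bij ha1 hL1
  obtain ⟨N2, hN2, hL2B⟩ := hG2.exists_hasBesselBound_dual hT2bij ha2 hL2
  have hbiorth : ∀ p q : ℕ × ℕ,
      ⟪φ (u1 p.1) (u2 p.2), φ (L1 q.1) (L2 q.2)⟫ = if p = q then 1 else 0 := fun p q => by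
    rw [hφ.1, hG1.inner_dual_eq_ite ha1 hL1, hG2.inner_dual_eq_ite ha2 hL2,
      ite_zero_mul_ite_zero, one_mul]
    exact if_congr Prod.ext_iff.symm rfl rfl
  let φc := φ.mkContinuous₂ 1 fun x y => by rw [one_mul, norm_apply_apply_of_inner hφ.1]
  have hmem : ∀ q : ℕ × ℕ, φ (L1 q.1) (L2 q.2) ∈
      (Submodule.span ℝ (Set.range fun p : ℕ × ℕ => φ (u1 p.1) (u2 p.2))).topologicalClosure :=
    fun q => φc.apply_apply_mem_topologicalClosure_span (hL1 q.1).mem_topologicalClosure_span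
      (hL2 q.2).mem_topologicalClosure_span
  simp only [hkk]
  obtain ⟨hu, hL⟩ := isRieszBasisOf_of_biorthogonal
    (hG1.hasBesselBound.tensor hG2.hasBesselBound (norm_nonneg _) hφ.1) (by positivity)
    (hL1B.tensor hL2B hN1 hφ.1) (mul_nonneg hN1 hN2) hbiorth hmem
  exact ⟨hu, hL, hbiorth⟩

/-- For determining sequences X, Y, the families (K₁(·,x_j)·K₂(·,y_k)) and
(L_{1,j}·L_{2,k}) are dual Riesz bases of H_{K,X×Y}, where K is the tensor product
kernel, realized in H ≅ H_{K₁} ⊗ H_{K₂} via the product map φ with feature map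
kk(x,y) = φ (k₁ x) (k₂ y). -/
theorem stmt_18 {d1 d2 : ℕ}
    (K1 : EuclideanSpace ℝ (Fin d1) → EuclideanSpace ℝ (Fin d1) → ℝ)
    (K2 : EuclideanSpace ℝ (Fin d2) → EuclideanSpace ℝ (Fin d2) → ℝ)
    (hK1 : IsPDKernel K1) (hK2 : IsPDKernel K2)
    {H1 : Type*} [NormedAddCommGroup H1] [InnerProductSpace ℝ H1] [CompleteSpace H1]
    (k1 : EuclideanSpace ℝ (Fin d1) → H1) (hk1 : ∀ x y, ⟪k1 x, k1 y⟫ = K1 x y)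
    (hdense1 : (Submodule.span ℝ (Set.range k1)).topologicalClosure = ⊤)
    {H2 : Type*} [NormedAddCommGroup H2] [InnerProductSpace ℝ H2] [CompleteSpace H2]
    (k2 : EuclideanSpace ℝ (Fin d2) → H2) (hk2 : ∀ x y, ⟪k2 x, k2 y⟫ = K2 x y)
    (hdense2 : (Submodule.span ℝ (Set.range k2)).topologicalClosure = ⊤)
    -- H realizes the Hilbert tensor product H_{K₁} ⊗ H_{K₂} ≅ H_K, with feature map kk
    {H : Type*} [NormedAddCommGroup H] [InnerProductSpace ℝ H] [CompleteSpace H]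
    (φ : H1 →ₗ[ℝ] H2 →ₗ[ℝ] H) (hφ : IsHilbertTensorProduct φ)
    (kk : EuclideanSpace ℝ (Fin d1) × EuclideanSpace ℝ (Fin d2) → H)
    (hkk : ∀ p, kk p = φ (k1 p.1) (k2 p.2))
    -- X and Y are determining sequences
    (X : ℕ → EuclideanSpace ℝ (Fin d1)) (hX : Function.Injective X)
    (Y : ℕ → EuclideanSpace ℝ (Fin d2)) (hY : Function.Injective Y)
    (T1 : lp (fun _ : ℕ => ℝ) 2 →L[ℝ] lp (fun _ : ℕ => ℝ) 2)
    (hT1bij : Function.Bijective T1)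
    (hT1 : ∀ (c : lp (fun _ : ℕ => ℝ) 2) (j : ℕ),
      HasSum (fun m => K1 (X j) (X m) * c m) (T1 c j))
    (T2 : lp (fun _ : ℕ => ℝ) 2 →L[ℝ] lp (fun _ : ℕ => ℝ) 2)
    (hT2bij : Function.Bijective T2)
    (hT2 : ∀ (c : lp (fun _ : ℕ => ℝ) 2) (j : ℕ),
      HasSum (fun m => K2 (Y j) (Y m) * c m) (T2 c j))
    -- the sampling (dual) functions L_{1,j} = Σ_n (A_{K₁,X}⁻¹ e_j)_n K₁(·,x_n),
    -- and similarly L_{2,k}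
    (a1 : ℕ → lp (fun _ : ℕ => ℝ) 2) (ha1 : ∀ i, T1 (a1 i) = lp.single 2 i 1)
    (L1 : ℕ → H1) (hL1 : ∀ i, HasSum (fun m => a1 i m • k1 (X m)) (L1 i))
    (a2 : ℕ → lp (fun _ : ℕ => ℝ) 2) (ha2 : ∀ i, T2 (a2 i) = lp.single 2 i 1)
    (L2 : ℕ → H2) (hL2 : ∀ i, HasSum (fun m => a2 i m • k2 (Y m)) (L2 i)) :
    IsRieszBasisOf
      ((Submodule.span ℝ (Set.range fun p : ℕ × ℕ => kk (X p.1, Y p.2))).topologicalClosure)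
      (fun p : ℕ × ℕ => kk (X p.1, Y p.2)) ∧
    IsRieszBasisOf
      ((Submodule.span ℝ (Set.range fun p : ℕ × ℕ => kk (X p.1, Y p.2))).topologicalClosure)
      (fun p : ℕ × ℕ => φ (L1 p.1) (L2 p.2)) ∧
    ∀ p q : ℕ × ℕ, ⟪kk (X p.1, Y p.2), φ (L1 q.1) (L2 q.2)⟫ = if p = q then 1 else 0 :=
  stmt_18_general K1 K2 k1 hk1 k2 hk2 φ hφ kk hkk X Y T1 hT1bij hT1 T2 hT2bij hT2 a1 ha1 L1 hL1 a2
    ha2 L2 hL2
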